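/- Let V be a variety of τ-algebras and let B be a subfamily of Con(F^V) that is closed under inverse substitution. Then the class K^B is closed under finitely generated subalgebras: every isomorphic copy of a finitely generated subalgebra of a member of K^B belongs to K^B. -/

import Mathlib

/-! Universal-algebra preamble: functional signatures, algebras (with nonempty
carriers, as usual in universal algebra), terms, homomorphisms, congruences,
quotients, free algebras, and the operators/uniformities of the paper.

Families indexed over the components of a clone are indexed by `k : ℕ`, where
index `k` stands for the component of arity `k + 1` (so all arities `≥ 1`). -/

/-- A functional signature: a type of function symbols together with arities. -/
structure Signature : Type 1 where
  F : Type
  arity : F → ℕ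

/-- A τ-algebra: a nonempty carrier together with an interpretation of each symbol. -/
structure Alg (σ : Signature) : Type 1 where
  carrier : Type
  nonempty : Nonempty carrier
  op : ∀ f : σ.F, (Fin (σ.arity f) → carrier) → carrier

/-- Abstract τ-terms over the variables x_1, …, x_n. -/
inductive Trm (σ : Signature) (n : ℕ) : Type
  | var : Fin n → Trm σ n
  | app : ∀ f : σ.F, (Fin (σ.arity f) → Trm σ n) → Trm σ n

variable {σ : Signature}

/-- Evaluation of a term in an algebra under a valuation of the variables. -/
def Trm.eval {n : ℕ} (A : Alg σ) (v : Fin n → A.carrier) : Trm σ n → A.carrier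
  | .var i => v i
  | .app f ts => A.op f fun i => Trm.eval A v (ts i)

/-- The term operation `t^A` induced on `A` by the term `t`. -/
def termOp {n : ℕ} (A : Alg σ) (t : Trm σ n) : (Fin n → A.carrier) → A.carrier :=
  fun v => t.eval A v

/-- Homomorphisms of τ-algebras. -/
def IsHom (A B : Alg σ) (h : A.carrier → B.carrier) : Prop :=
  ∀ (f : σ.F) (x : Fin (σ.arity f) → A.carrier), h (A.op f x) = B.op f fun i => h (x i)

/-- Isomorphism of τ-algebras. -/
def Isomorphic (A B : Alg σ) : Prop :=
  ∃ h : A.carrier → B.carrier, IsHom A B h ∧ Function.Bijective h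

/-- Membership in the subuniverse generated by `S`. -/
inductive InClosure (A : Alg σ) (S : Set A.carrier) : A.carrier → Prop
  | base : ∀ a ∈ S, InClosure A S a
  | app : ∀ (f : σ.F) (x : Fin (σ.arity f) → A.carrier),
      (∀ i, InClosure A S (x i)) → InClosure A S (A.op f x)

/-- An algebra is finitely generated if a finite subset generates it. -/
def FinGen (A : Alg σ) : Prop :=
  ∃ S : Set A.carrier, S.Finite ∧ ∀ a, InClosure A S a

/-- Product of a family of algebras. -/
def PiAlg {ι : Type} (A : ι → Alg σ) : Alg σ where
  carrier := ∀ i, (A i).carrier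
  nonempty := ⟨fun i => Classical.choice (A i).nonempty⟩
  op f x := fun i => (A i).op f fun j => x j i

/-- A congruence: an equivalence relation compatible with all operations. -/
def IsCongruence (A : Alg σ) (r : A.carrier → A.carrier → Prop) : Prop :=
  Equivalence r ∧ ∀ (f : σ.F) (x y : Fin (σ.arity f) → A.carrier),
    (∀ i, r (x i) (y i)) → r (A.op f x) (A.op f y)

/-- Bundled congruences on an algebra. -/
structure Cong (A : Alg σ) : Type where
  r : A.carrier → A.carrier → Prop
  iscon : IsCongruence A r

/-- The quotient algebra of `A` by (a relation which is intended to be) a congruence. -/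
noncomputable def quotAlg (A : Alg σ) (r : A.carrier → A.carrier → Prop) : Alg σ where
  carrier := Quot r
  nonempty := ⟨Quot.mk r (Classical.choice A.nonempty)⟩
  op f x := Quot.mk r (A.op f fun i => (x i).out)

/-- The subalgebra of `A` on a nonempty subset closed under the operations. -/
def subAlg (A : Alg σ) (S : Set A.carrier) (hne : S.Nonempty)
    (hcl : ∀ (f : σ.F) (x : Fin (σ.arity f) → A.carrier), (∀ i, x i ∈ S) → A.op f x ∈ S) :
    Alg σ where
  carrier := {a : A.carrier // a ∈ S}
  nonempty := ⟨⟨hne.choose, hne.choose_spec⟩⟩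
  op f x := ⟨A.op f fun i => (x i).1, hcl f _ fun i => (x i).2⟩

/-- The subalgebra of `A` generated by a nonempty subset `S`. -/
def genSubAlg (A : Alg σ) (S : Set A.carrier) (hne : S.Nonempty) : Alg σ where
  carrier := {a : A.carrier // InClosure A S a}
  nonempty := ⟨⟨hne.choose, InClosure.base _ hne.choose_spec⟩⟩
  op f x := ⟨A.op f fun i => (x i).1, InClosure.app f _ fun i => (x i).2⟩

/-- H: homomorphic images of members of `K`. -/
def Hcl (K : Set (Alg σ)) : Set (Alg σ) :=
  {B | ∃ A ∈ K, ∃ h : A.carrier → B.carrier, IsHom A B h ∧ Function.Surjective h}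

/-- I: isomorphic copies of members of `K`. -/
def Icl (K : Set (Alg σ)) : Set (Alg σ) := {B | ∃ A ∈ K, Isomorphic A B}

/-- S: isomorphic copies of subalgebras (i.e. algebras embedding into members) of `K`. -/
def Scl (K : Set (Alg σ)) : Set (Alg σ) :=
  {B | ∃ A ∈ K, ∃ e : B.carrier → A.carrier, IsHom B A e ∧ Function.Injective e}

/-- P_f: isomorphic copies of finite (nonempty) products of members of `K`. -/
def Pfcl (K : Set (Alg σ)) : Set (Alg σ) :=
  {B | ∃ (n : ℕ) (A : Fin (n + 1) → Alg σ), (∀ i, A i ∈ K) ∧ Isomorphic (PiAlg A) B}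

/-- S_f: isomorphic copies of finitely generated subalgebras of members of `K`. -/
def Sf (K : Set (Alg σ)) : Set (Alg σ) :=
  {B | FinGen B ∧ ∃ A ∈ K, ∃ e : B.carrier → A.carrier, IsHom B A e ∧ Function.Injective e}

/-- S P_f: isomorphic copies of finitely generated subalgebras of finite products
of members of `K`. -/
def SPf (K : Set (Alg σ)) : Set (Alg σ) :=
  {B | FinGen B ∧ ∃ (n : ℕ) (A : Fin (n + 1) → Alg σ), (∀ i, A i ∈ K) ∧
    ∃ e : B.carrier → (PiAlg A).carrier, IsHom B (PiAlg A) e ∧ Function.Injective e}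

/-- A pseudovariety of finitely generated algebras: a class of finitely generated
algebras closed under homomorphic images and under isomorphic copies of finitely
generated subalgebras of finite products of its members. -/
def IsPseudovarietyFG (C : Set (Alg σ)) : Prop :=
  (∀ A ∈ C, FinGen A) ∧ Hcl C ⊆ C ∧ SPf C ⊆ C

/-- A pseudovariety of finite algebras: a class of finite algebras closed under
finite products, subalgebras and homomorphic images. -/
def IsPseudovarietyFin (C : Set (Alg σ)) : Prop :=
  (∀ A ∈ C, Finite A.carrier) ∧ Hcl C ⊆ C ∧ Scl C ⊆ C ∧ Pfcl C ⊆ C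

/-- A variety: a class closed under arbitrary products, subalgebras and
homomorphic images. -/
def IsVariety (V : Set (Alg σ)) : Prop :=
  (∀ (ι : Type) (A : ι → Alg σ), (∀ i, A i ∈ V) → PiAlg A ∈ V) ∧
  Scl V ⊆ V ∧ Hcl V ⊆ V

/-- The identities of the class `C`: `s` and `t` are identified iff they induce the
same operation on every member of `C`. -/
def FreeCon (C : Set (Alg σ)) (n : ℕ) : Trm σ n → Trm σ n → Prop :=
  fun s t => ∀ A ∈ C, ∀ v : Fin n → A.carrier, s.eval A v = t.eval A v

/-- `freeAlg C k` is `F_{k+1}^C`, the free algebra for `C` on `k + 1` generators: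
the term algebra on the variables `x_1, …, x_{k+1}` modulo the identities of `C`.
(The index `k` stands for arity `k + 1`, so all components have arity `≥ 1`.) -/
noncomputable def freeAlg (C : Set (Alg σ)) (k : ℕ) : Alg σ where
  carrier := Quot (FreeCon C (k + 1))
  nonempty := ⟨Quot.mk _ (Trm.var 0)⟩
  op f x := Quot.mk _ (Trm.app f fun i => (x i).out)

/-- The finitely generated members of `V`. -/
def Vfg (V : Set (Alg σ)) : Set (Alg σ) := {A | A ∈ V ∧ FinGen A}

/-- `B^K`: the congruences of the free algebras whose quotient is isomorphic to a
member of `K`. -/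
def BK (V K : Set (Alg σ)) (k : ℕ) : Set (Cong (freeAlg V k)) :=
  {θ | quotAlg (freeAlg V k) θ.r ∈ Icl K}

/-- `K^B`: isomorphic copies of the quotients of free algebras by congruences in `B`. -/
def KB (V : Set (Alg σ)) (B : ∀ k : ℕ, Set (Cong (freeAlg V k))) : Set (Alg σ) :=
  Icl {A | ∃ (k : ℕ), ∃ θ ∈ B k, A = quotAlg (freeAlg V k) θ.r}

/-- `θ/t̄`: the inverse substitution of the congruence `θ` along the tuple `t̄`;
`s (θ/t̄) s'` iff `s(t₁,…,t_m) θ s'(t₁,…,t_m)`. -/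
noncomputable def conSubstRel {V : Set (Alg σ)} {k : ℕ} (θ : Cong (freeAlg V k)) {m : ℕ}
    (t : Fin (m + 1) → (freeAlg V k).carrier) :
    (freeAlg V m).carrier → (freeAlg V m).carrier → Prop :=
  fun s s' => θ.r (Trm.eval (freeAlg V k) t s.out) (Trm.eval (freeAlg V k) t s'.out)

/-- A family of congruences is closed under inverse substitution. -/
def InvSubstClosed (V : Set (Alg σ)) (B : ∀ k : ℕ, Set (Cong (freeAlg V k))) : Prop :=
  ∀ (k m : ℕ), ∀ θ ∈ B k, ∀ t : Fin (m + 1) → (freeAlg V k).carrier,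
    ∃ θ' ∈ B m, θ'.r = conSubstRel θ t

/-- A family of congruences is closed under finite intersections (componentwise). -/
def InterClosed (V : Set (Alg σ)) (B : ∀ k : ℕ, Set (Cong (freeAlg V k))) : Prop :=
  ∀ (k n : ℕ) (θs : Fin (n + 1) → Cong (freeAlg V k)), (∀ i, θs i ∈ B k) →
    ∃ θ' ∈ B k, θ'.r = fun a b => ∀ i, (θs i).r a b

/-- A family of congruences is upward closed (componentwise). -/
def UpClosed (V : Set (Alg σ)) (B : ∀ k : ℕ, Set (Cong (freeAlg V k))) : Prop :=
  ∀ (k : ℕ), ∀ θ ∈ B k, ∀ ψ : Cong (freeAlg V k), (∀ a b, θ.r a b → ψ.r a b) → ψ ∈ B k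

/-- A filter on `X × X` is a uniformity: every entourage contains the diagonal, the
converse of an entourage is an entourage, and the generalised triangle inequality. -/
def IsUniformity {X : Type} (u : Filter (X × X)) : Prop :=
  (∀ U ∈ u, ∀ x : X, (x, x) ∈ U) ∧
  (∀ U ∈ u, {p : X × X | (p.2, p.1) ∈ U} ∈ u) ∧
  (∀ U ∈ u, ∃ W ∈ u, ∀ x y z : X, (x, y) ∈ W → (y, z) ∈ W → (x, z) ∈ U)

/-- `U^C` (the component of index `k`, i.e. of arity `k + 1`): the filter on
`F_{k+1}^V × F_{k+1}^V` generated by the congruences `θ` of `F_{k+1}^V` such that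
`F_{k+1}^V/θ` is isomorphic to a member of `C`. -/
noncomputable def unifC (V C : Set (Alg σ)) (k : ℕ) :
    Filter ((freeAlg V k).carrier × (freeAlg V k).carrier) :=
  Filter.generate
    {U | ∃ θ : Cong (freeAlg V k), quotAlg (freeAlg V k) θ.r ∈ Icl C ∧ U = {p | θ.r p.1 p.2}}

/-- The `(k+1)`-ary part of `Clo(A)`: the `(k+1)`-ary term operations of `A`. -/
def CloK (A : Alg σ) (k : ℕ) : Type :=
  {g : (Fin (k + 1) → A.carrier) → A.carrier // ∃ t : Trm σ (k + 1), g = termOp A t}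

/-- The uniformity of pointwise convergence on the `(k+1)`-ary part of `Clo(A)`:
generated by the sets `U_ā = {(f, g) | f(ā) = g(ā)}`. -/
noncomputable def ptwUnif (A : Alg σ) (k : ℕ) : Filter (CloK A k × CloK A k) :=
  Filter.generate {U | ∃ a : Fin (k + 1) → A.carrier, U = {p | p.1.1 a = p.2.1 a}}

/-- The natural map from the free algebra for `C` onto `Clo(A)`, sending the class
of a term `t` to the term operation `t^A`. -/
noncomputable def natMap (C : Set (Alg σ)) (A : Alg σ) (k : ℕ) :
    (freeAlg C k).carrier → CloK A k :=
  fun q => ⟨termOp A q.out, q.out, rfl⟩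

/-- The natural map between the free algebras of two classes (class of `t` to
class of `t`). -/
noncomputable def freeNatMap (C D : Set (Alg σ)) (k : ℕ) :
    (freeAlg C k).carrier → (freeAlg D k).carrier :=
  fun q => Quot.mk _ q.out

/-- The natural map `Clo(A) → Clo(B)`, sending `t^A` to `t^B`. -/
noncomputable def cloNatMap (A B : Alg σ) (k : ℕ) : CloK A k → CloK B k :=
  fun g => ⟨termOp B (Classical.choose g.2), Classical.choose g.2, rfl⟩

/-- The variety generated by `A`. -/
def varietyGen (A : Alg σ) : Set (Alg σ) :=
  {B | ∀ V : Set (Alg σ), IsVariety V → A ∈ V → B ∈ V}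

/-- The pseudovariety generated by `A`: the smallest class containing `A` closed
under finite products, subalgebras and homomorphic images. -/
def psvGen (A : Alg σ) : Set (Alg σ) :=
  {B | ∀ C : Set (Alg σ), A ∈ C → Hcl C ⊆ C → Scl C ⊆ C → Pfcl C ⊆ C → B ∈ C}

/-- The pseudovariety of finitely generated algebras generated by `A`: the finitely
generated members of the pseudovariety generated by `A`. -/
def psvFgGen (A : Alg σ) : Set (Alg σ) := {B | FinGen B ∧ B ∈ psvGen A}

/-! Embed the finitely generated algebra `C` into `F_k/θ` by `ι` and pick generators
`c₀, …, c_m` of `C`. Since `C` satisfies the identities of `V`, sending `x_i ↦ c_i`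
defines a surjection `F_m → C`, and two terms have the same image iff their images
under `ι` agree, i.e. iff they are related by `θ/t̄` for representatives `t_i` of
`ι c_i`. Hence `C ≅ F_m/(θ/t̄)`, and `θ/t̄ ∈ B` by closure under inverse
substitution. -/

theorem Equivalence.out_mk {α : Type} {r : α → α → Prop} (hr : Equivalence r) (a : α) :
    r (Quot.mk r a).out a :=
  (hr.quot_mk_eq_iff _ _).mp (Quot.out_eq _)

theorem IsHom.comp {A B C : Alg σ} {g : B.carrier → C.carrier} {h : A.carrier → B.carrier}
    (hg : IsHom B C g) (hh : IsHom A B h) : IsHom A C (g ∘ h) := by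
  intro f x
  simp only [Function.comp_apply, hh f x, hg f]

theorem IsHom.ofBijective_symm {A B : Alg σ} {h : A.carrier → B.carrier} (hh : IsHom A B h)
    (hb : Function.Bijective h) : IsHom B A (Equiv.ofBijective h hb).symm := by
  intro f x
  apply hb.1
  simp only [hh f, Equiv.ofBijective_apply_symm_apply]

theorem IsHom.map_eval {A B : Alg σ} {h : A.carrier → B.carrier} (hh : IsHom A B h)
    {n : ℕ} (s : Trm σ n) (v : Fin n → A.carrier) :
    h (s.eval A v) = s.eval B (h ∘ v) := by
  induction s with
  | var i => rfl
  | app f ts ih =>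
      show h (A.op f fun i => (ts i).eval A v) = B.op f fun i => (ts i).eval B (h ∘ v)
      simp only [hh f, ih]

theorem IsCongruence.isHom_quotMk {A : Alg σ} {r : A.carrier → A.carrier → Prop}
    (hr : IsCongruence A r) : IsHom A (quotAlg A r) (Quot.mk r) := fun f x =>
  Quot.sound (hr.2 f _ _ fun i => hr.1.symm (hr.1.out_mk (x i)))

theorem isomorphic_quotAlg_of_ker {A C : Alg σ} {r : A.carrier → A.carrier → Prop}
    {p : A.carrier → C.carrier} (hp : IsHom A C p) (hs : Function.Surjective p)
    (hker : ∀ a b, r a b ↔ p a = p b) : Isomorphic (quotAlg A r) C := by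
  refine ⟨Quot.lift p fun a b hab => (hker a b).mp hab, ?_, ?_, ?_⟩
  · intro f x
    show p (A.op f fun i => (x i).out) = _
    rw [hp f]
    congr 1
    funext i
    conv_rhs => rw [← Quot.out_eq (x i)]
  · rintro ⟨a⟩ ⟨b⟩ hab
    exact Quot.sound ((hker a b).mpr hab)
  · intro c
    obtain ⟨a, rfl⟩ := hs c
    exact ⟨Quot.mk r a, rfl⟩

theorem InClosure.mono {A : Alg σ} {S T : Set A.carrier} {a : A.carrier}
    (h : InClosure A S a) (hST : S ⊆ T) : InClosure A T a := by
  induction h with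
  | base a ha => exact .base a (hST ha)
  | app f x _ ih => exact .app f x ih

theorem InClosure.exists_trm_eval {A : Alg σ} {n : ℕ} {g : Fin n → A.carrier} {a : A.carrier}
    (h : InClosure A (Set.range g) a) : ∃ s : Trm σ n, s.eval A g = a := by
  induction h with
  | base a ha =>
      obtain ⟨i, rfl⟩ := ha
      exact ⟨.var i, rfl⟩
  | app f x _ ih =>
      choose ts hts using ih
      exact ⟨.app f ts, show A.op f _ = A.op f x by simp only [hts]⟩

theorem FinGen.exists_fin_generators {A : Alg σ} (hA : FinGen A) :
    ∃ (m : ℕ) (g : Fin (m + 1) → A.carrier), ∀ a, InClosure A (Set.range g) a := by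
  obtain ⟨S, hS, hgen⟩ := hA
  obtain ⟨m, f, hf⟩ := hS.fin_embedding
  obtain ⟨a₀⟩ := A.nonempty
  refine ⟨m, Fin.cons a₀ f, fun a => (hgen a).mono ?_⟩
  rw [Fin.range_cons, hf]
  exact Set.subset_insert _ _

def Trm.subst {n m : ℕ} (u : Fin n → Trm σ m) : Trm σ n → Trm σ m
  | .var i => u i
  | .app f ts => .app f fun i => (ts i).subst u

theorem Trm.eval_subst {n m : ℕ} (A : Alg σ) (u : Fin n → Trm σ m) (w : Fin m → A.carrier)
    (s : Trm σ n) : (s.subst u).eval A w = s.eval A fun i => (u i).eval A w := by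
  induction s with
  | var i => rfl
  | app f ts ih =>
      show A.op f _ = A.op f _
      simp only [ih]

theorem freeCon_equivalence (C : Set (Alg σ)) (n : ℕ) : Equivalence (FreeCon C n) :=
  ⟨fun _ _ _ _ => rfl, fun h A hA v => (h A hA v).symm,
    fun h₁ h₂ A hA v => (h₁ A hA v).trans (h₂ A hA v)⟩

theorem freeAlg_eval (V : Set (Alg σ)) (k : ℕ) {n : ℕ} (s : Trm σ n)
    (v : Fin n → (freeAlg V k).carrier) :
    s.eval (freeAlg V k) v = Quot.mk (FreeCon V (k + 1)) (s.subst fun i => (v i).out) := by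
  induction s with
  | var i => exact (Quot.out_eq _).symm
  | app f ts ih =>
      refine Quot.sound fun A hA w => ?_
      show A.op f _ = A.op f _
      congr 1
      funext i
      exact ((freeCon_equivalence V (k + 1)).quot_mk_eq_iff _ _).mp
        ((Quot.out_eq _).trans (ih i)) A hA w

/-- `V ⊨ s ≈ t` implies `C ⊨ s ≈ t`. -/
def SatisfiesIdentitiesOf (V : Set (Alg σ)) (C : Alg σ) : Prop :=
  ∀ ⦃n : ℕ⦄ ⦃s t : Trm σ n⦄, FreeCon V n s t →
    ∀ v : Fin n → C.carrier, s.eval C v = t.eval C v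

theorem satisfiesIdentitiesOf_freeAlg (V : Set (Alg σ)) (k : ℕ) :
    SatisfiesIdentitiesOf V (freeAlg V k) := by
  intro n s t hst v
  rw [freeAlg_eval, freeAlg_eval]
  exact Quot.sound fun A hA w => by rw [Trm.eval_subst, Trm.eval_subst]; exact hst A hA _

theorem SatisfiesIdentitiesOf.of_surjective {V : Set (Alg σ)} {A B : Alg σ}
    {h : A.carrier → B.carrier} (hA : SatisfiesIdentitiesOf V A) (hh : IsHom A B h)
    (hs : Function.Surjective h) : SatisfiesIdentitiesOf V B := by
  intro n s t hst v
  have hv : h ∘ (Function.surjInv hs ∘ v) = v := funext fun i => Function.surjInv_eq hs (v i)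
  rw [← hv, ← hh.map_eval, ← hh.map_eval, hA hst]

theorem SatisfiesIdentitiesOf.of_injective {V : Set (Alg σ)} {A B : Alg σ}
    {h : A.carrier → B.carrier} (hB : SatisfiesIdentitiesOf V B) (hh : IsHom A B h)
    (hi : Function.Injective h) : SatisfiesIdentitiesOf V A := fun _ _ _ hst v =>
  hi (by rw [hh.map_eval, hh.map_eval, hB hst])

noncomputable def freeLift (V : Set (Alg σ)) (C : Alg σ) {m : ℕ}
    (g : Fin (m + 1) → C.carrier) : (freeAlg V m).carrier → C.carrier :=
  fun q => q.out.eval C g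

section FreeLift

variable {V : Set (Alg σ)} {C : Alg σ} {m : ℕ}

theorem freeLift_mk (hC : SatisfiesIdentitiesOf V C) (g : Fin (m + 1) → C.carrier)
    (s : Trm σ (m + 1)) : freeLift V C g (Quot.mk _ s) = s.eval C g :=
  hC ((freeCon_equivalence V (m + 1)).out_mk s) g

theorem isHom_freeLift (hC : SatisfiesIdentitiesOf V C) (g : Fin (m + 1) → C.carrier) :
    IsHom (freeAlg V m) C (freeLift V C g) := fun f x =>
  freeLift_mk hC g (.app f fun i => (x i).out)

theorem freeLift_surjective (hC : SatisfiesIdentitiesOf V C) {g : Fin (m + 1) → C.carrier}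
    (hg : ∀ c, InClosure C (Set.range g) c) :
    Function.Surjective (freeLift V C g) := fun c => by
  obtain ⟨s, rfl⟩ := (hg c).exists_trm_eval
  exact ⟨Quot.mk _ s, freeLift_mk hC g s⟩

end FreeLift

theorem isomorphic_quotAlg_conSubstRel {V : Set (Alg σ)} {k m : ℕ} (θ : Cong (freeAlg V k))
    {C : Alg σ} {ι : C.carrier → (quotAlg (freeAlg V k) θ.r).carrier}
    (hι : IsHom C _ ι) (hι_inj : Function.Injective ι) {g : Fin (m + 1) → C.carrier}
    (hg : ∀ c, InClosure C (Set.range g) c) :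
    Isomorphic (quotAlg (freeAlg V m) (conSubstRel θ fun i => (ι (g i)).out)) C := by
  set t : Fin (m + 1) → (freeAlg V k).carrier := fun i => (ι (g i)).out
  have hmk := θ.iscon.isHom_quotMk
  have hC : SatisfiesIdentitiesOf V C :=
    ((satisfiesIdentitiesOf_freeAlg V k).of_surjective hmk Quot.mk_surjective).of_injective
      hι hι_inj
  have hι_lift : ∀ q, ι (freeLift V C g q) = Quot.mk θ.r (q.out.eval (freeAlg V k) t) := by
    intro q
    have hιg : ι ∘ g = Quot.mk θ.r ∘ t := funext fun i => (Quot.out_eq _).symm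
    show ι (q.out.eval C g) = _
    rw [hι.map_eval, hmk.map_eval, hιg]
    rfl
  refine isomorphic_quotAlg_of_ker (isHom_freeLift hC g) (freeLift_surjective hC hg) ?_
  intro a b
  rw [← hι_inj.eq_iff, hι_lift, hι_lift]
  exact (θ.iscon.1.quot_mk_eq_iff _ _).symm

theorem KB_Sf_closed_general {σ : Signature} (V : Set (Alg σ))
    (B : ∀ k : ℕ, Set (Cong (freeAlg V k))) (hB : InvSubstClosed V B) :
    Sf (KB V B) ⊆ KB V B := by
  rintro C ⟨hfg, D, ⟨_, ⟨k, θ, hθ, rfl⟩, h, hh, hbij⟩, e, he, he_inj⟩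
  have hι := (hh.ofBijective_symm hbij).comp he
  have hι_inj := (Equiv.ofBijective h hbij).symm.injective.comp he_inj
  obtain ⟨m, g, hg⟩ := hfg.exists_fin_generators
  obtain ⟨θ', hθ', hθ'r⟩ := hB k m θ hθ _
  exact ⟨_, ⟨m, θ', hθ', rfl⟩, hθ'r ▸ isomorphic_quotAlg_conSubstRel θ hι hι_inj hg⟩

/-- If `B` is a subfamily of `Con(F^V)` closed under inverse
substitution, then `K^B` is closed under finitely generated subalgebras: every
isomorphic copy of a finitely generated subalgebra of a member of `K^B` belongs
to `K^B`. -/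
theorem KB_Sf_closed {σ : Signature} (V : Set (Alg σ)) (hV : IsVariety V)
    (B : ∀ k : ℕ, Set (Cong (freeAlg V k))) (hB : InvSubstClosed V B) :
    Sf (KB V B) ⊆ KB V B :=
  KB_Sf_closed_general V B hB
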